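/- In the regression lower-bound construction, for each split j ∈ {2i−1, 2i}, the mean squared loss satisfies L(j) ≤ 1/201. Consequently, min_{0 ≤ j ≤ N} L(j) = min{L(2i−1), L(2i)}. -/

import Mathlib

/-!
With labels in `{0, 1}`, a range holding `c` points of which `s` are ones has
`SSE = s (c - s) / c`, which lies below both `s` and `c - s`, and is at least `t² / c` as soon
as `s ≥ t` and `c - s ≥ t`. For a split `j ∈ {2i - 1, 2i}` the left range misses the block of
`T` ones and the right range misses the block of `T` zeros, so the loss is at most the number
`n²` of bit points divided by `m = 201 n²`. Every other split puts both blocks on one side, and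
that side alone already has loss at least `T² / m² = (100 / 201)² > 1 / 201`.
-/

open Finset

/-- SSE of the data points of a multiset dataset whose feature value lies in range `R`. -/
noncomputable def SSE (data : Multiset (ℕ × ℝ)) (R : Finset ℕ) : ℝ :=
  let d := data.filter fun p => p.1 ∈ R
  if d ≠ 0 then
    (d.map fun p => p.2 ^ 2).sum - ((d.map fun p => p.2).sum) ^ 2 / (Multiset.card d : ℝ)
  else 0

/-- Mean squared loss of split `j ∈ {0,…,N}`. -/
noncomputable def L (N : ℕ) (data : Multiset (ℕ × ℝ)) (j : ℕ) : ℝ :=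
  (1 / (Multiset.card data : ℝ)) *
    (SSE data (Finset.Icc 1 j) + SSE data (Finset.Icc (j + 1) N))

/-- The regression lower-bound dataset: for each `k ∈ {1,…,n}`, `B = n` copies of `(2k, z_k)`;
`T = 100n²` copies of `(2i−1, 0)`; and `T` copies of `(2i+1, 1)`. -/
def regData (n i : ℕ) (z : ℕ → ℝ) : Multiset (ℕ × ℝ) :=
  (∑ k ∈ Finset.Icc 1 n, Multiset.replicate n (2 * k, z k))
  + Multiset.replicate (100 * n ^ 2) (2 * i - 1, (0 : ℝ))
  + Multiset.replicate (100 * n ^ 2) (2 * i + 1, (1 : ℝ))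

lemma Finset.inf'_eq_min_of_le {α β : Type*} [LinearOrder β] {s : Finset α} (hs : s.Nonempty)
    {f : α → β} {a b : α} (ha : a ∈ s) (hb : b ∈ s)
    (h : ∀ j ∈ s, j ≠ a → j ≠ b → min (f a) (f b) ≤ f j) :
    s.inf' hs f = min (f a) (f b) := by
  refine le_antisymm (le_min (inf'_le f ha) (inf'_le f hb)) (le_inf' hs f fun j hj => ?_)
  rcases eq_or_ne j a with rfl | hja
  · exact min_le_left _ _
  rcases eq_or_ne j b with rfl | hjb
  · exact min_le_right _ _
  exact h j hj hja hjb

noncomputable def sumSqDev (ys : Multiset ℝ) : ℝ :=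
  (ys.map (· ^ 2)).sum - ys.sum ^ 2 / Multiset.card ys

def IsBinary (ys : Multiset ℝ) : Prop :=
  ∀ y ∈ ys, y = 0 ∨ y = 1

namespace IsBinary

variable {ys zs : Multiset ℝ}

lemma mono (h : IsBinary zs) (hle : ys ≤ zs) : IsBinary ys :=
  fun y hy => h y (Multiset.subset_of_le hle hy)

lemma add (hy : IsBinary ys) (hz : IsBinary zs) : IsBinary (ys + zs) := by
  intro y h
  rcases Multiset.mem_add.mp h with h | h
  exacts [hy y h, hz y h]

lemma replicate_zero (k : ℕ) : IsBinary (Multiset.replicate k 0) :=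
  fun _ h => .inl (Multiset.eq_of_mem_replicate h)

lemma replicate_one (k : ℕ) : IsBinary (Multiset.replicate k 1) :=
  fun _ h => .inr (Multiset.eq_of_mem_replicate h)

lemma sum_nonneg (h : IsBinary ys) : 0 ≤ ys.sum :=
  Multiset.sum_nonneg fun y hy => by rcases h y hy with rfl | rfl <;> norm_num

lemma sum_le_card (h : IsBinary ys) : ys.sum ≤ Multiset.card ys := by
  simpa using Multiset.sum_le_card_nsmul ys 1 fun y hy => by
    rcases h y hy with rfl | rfl <;> norm_num

lemma sumSqDev_eq (h : IsBinary ys) :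
    sumSqDev ys = ys.sum * (Multiset.card ys - ys.sum) / Multiset.card ys := by
  have hsq : (ys.map (· ^ 2)).sum = ys.sum := by
    conv_rhs => rw [← Multiset.map_id' ys]
    exact congrArg Multiset.sum <| Multiset.map_congr rfl fun y hy => by
      rcases h y hy with rfl | rfl <;> norm_num
  rcases eq_or_ne (Multiset.card ys : ℝ) 0 with hc | hc
  · obtain rfl : ys = 0 := Multiset.card_eq_zero.mp (by exact_mod_cast hc)
    simp [sumSqDev]
  · rw [sumSqDev, hsq]
    field_simp

lemma sumSqDev_nonneg (h : IsBinary ys) : 0 ≤ sumSqDev ys := by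
  rw [h.sumSqDev_eq]
  have := h.sum_le_card
  have := h.sum_nonneg
  positivity

lemma sumSqDev_le_sum (h : IsBinary ys) : sumSqDev ys ≤ ys.sum := by
  rw [h.sumSqDev_eq]
  have hs := h.sum_nonneg
  have hsc := h.sum_le_card
  rcases eq_or_lt_of_le (hs.trans hsc) with hc | hc
  · rw [← hc, div_zero]; exact hs
  · rw [div_le_iff₀ hc]; nlinarith

lemma sumSqDev_le_card_sub_sum (h : IsBinary ys) :
    sumSqDev ys ≤ Multiset.card ys - ys.sum := by
  rw [h.sumSqDev_eq]
  have hs := h.sum_nonneg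
  have hsc := h.sum_le_card
  rcases eq_or_lt_of_le (hs.trans hsc) with hc | hc
  · rw [← hc, div_zero]; linarith
  · rw [div_le_iff₀ hc]; nlinarith

lemma sq_div_card_le_sumSqDev (h : IsBinary ys) {t : ℝ} (ht : 0 ≤ t) (hs : t ≤ ys.sum)
    (hcs : t ≤ Multiset.card ys - ys.sum) :
    t ^ 2 / Multiset.card ys ≤ sumSqDev ys := by
  rw [h.sumSqDev_eq]
  gcongr
  nlinarith

end IsBinary

def labelsIn (data : Multiset (ℕ × ℝ)) (R : Finset ℕ) : Multiset ℝ :=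
  (data.filter fun p => p.1 ∈ R).map Prod.snd

section labelsIn

variable (data data' : Multiset (ℕ × ℝ)) (R S : Finset ℕ)

/-- The junk branch `SSE = 0` of an empty range agrees with `sumSqDev 0 = 0 - 0 / 0`. -/
lemma SSE_eq_sumSqDev : SSE data R = sumSqDev (labelsIn data R) := by
  unfold SSE sumSqDev labelsIn
  dsimp only
  split_ifs with h
  · simp only [Multiset.map_map, Multiset.card_map]; rfl
  · simp [not_not.mp h]

lemma labelsIn_add : labelsIn (data + data') R = labelsIn data R + labelsIn data' R := by
  simp [labelsIn, Multiset.filter_add]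

lemma labelsIn_replicate (k x : ℕ) (y : ℝ) :
    labelsIn (Multiset.replicate k (x, y)) R = if x ∈ R then Multiset.replicate k y else 0 := by
  unfold labelsIn
  split_ifs with h
  · rw [Multiset.filter_eq_self.mpr fun p hp => by rwa [Multiset.eq_of_mem_replicate hp],
      Multiset.map_replicate]
  · rw [Multiset.filter_eq_nil.mpr fun p hp => by rwa [Multiset.eq_of_mem_replicate hp],
      Multiset.map_zero]

lemma labelsIn_le : labelsIn data R ≤ data.map Prod.snd :=
  Multiset.map_le_map (Multiset.filter_le _ _)

lemma card_labelsIn_add_card_labelsIn_le (hRS : Disjoint R S) :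
    Multiset.card (labelsIn data R) + Multiset.card (labelsIn data S) ≤ Multiset.card data := by
  have hempty : (data.filter fun p => p.1 ∈ R ∧ p.1 ∈ S) = 0 :=
    Multiset.filter_eq_nil.mpr fun p _ h => Finset.disjoint_left.mp hRS h.1 h.2
  simp only [labelsIn, Multiset.card_map, ← Multiset.card_add, Multiset.filter_add_filter,
    hempty, add_zero]
  exact Multiset.card_le_card (Multiset.filter_le _ _)

end labelsIn

def bitBlock (n : ℕ) (z : ℕ → ℝ) : Multiset (ℕ × ℝ) :=
  ∑ k ∈ Finset.Icc 1 n, Multiset.replicate n (2 * k, z k)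

section regData

variable (n i : ℕ) (z : ℕ → ℝ)

lemma card_bitBlock : Multiset.card (bitBlock n z) = n * n := by
  simp [bitBlock, Multiset.card_sum]

lemma isBinary_labels_bitBlock (hz : ∀ k, z k = 0 ∨ z k = 1) :
    IsBinary ((bitBlock n z).map Prod.snd) := by
  intro y hy
  obtain ⟨p, hp, rfl⟩ := Multiset.mem_map.mp hy
  obtain ⟨k, -, hk⟩ := Multiset.mem_sum.mp hp
  rw [Multiset.eq_of_mem_replicate hk]
  exact hz k

lemma regData_eq : regData n i z = bitBlock n z
    + Multiset.replicate (100 * n ^ 2) (2 * i - 1, 0)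
    + Multiset.replicate (100 * n ^ 2) (2 * i + 1, 1) := rfl

lemma labelsIn_regData (R : Finset ℕ) :
    labelsIn (regData n i z) R = labelsIn (bitBlock n z) R
      + (if 2 * i - 1 ∈ R then Multiset.replicate (100 * n ^ 2) 0 else 0)
      + (if 2 * i + 1 ∈ R then Multiset.replicate (100 * n ^ 2) 1 else 0) := by
  simp only [regData_eq, labelsIn_add, labelsIn_replicate]

lemma isBinary_labels_regData (hz : ∀ k, z k = 0 ∨ z k = 1) :
    IsBinary ((regData n i z).map Prod.snd) := by
  simp only [regData_eq, Multiset.map_add, Multiset.map_replicate]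
  exact ((isBinary_labels_bitBlock n z hz).add (.replicate_zero _)).add (.replicate_one _)

lemma card_regData : (Multiset.card (regData n i z) : ℝ) = 201 * n ^ 2 := by
  simp only [regData_eq, Multiset.card_add, Multiset.card_replicate, card_bitBlock]
  push_cast
  ring

lemma L_regData (j : ℕ) : L (2 * n + 1) (regData n i z) j =
    (SSE (regData n i z) (Icc 1 j) + SSE (regData n i z) (Icc (j + 1) (2 * n + 1)))
      / (201 * n ^ 2) := by
  rw [L, card_regData, one_div_mul_eq_div]

variable {n i} (hz : ∀ k, z k = 0 ∨ z k = 1)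
include hz

lemma SSE_add_SSE_regData_le {j : ℕ} (hj₁ : 2 * i - 1 ≤ j) (hj₂ : j ≤ 2 * i) :
    SSE (regData n i z) (Icc 1 j) + SSE (regData n i z) (Icc (j + 1) (2 * n + 1)) ≤ n ^ 2 := by
  have hL : 2 * i + 1 ∉ Icc 1 j := by simp only [Finset.mem_Icc]; omega
  have hR : 2 * i - 1 ∉ Icc (j + 1) (2 * n + 1) := by simp only [Finset.mem_Icc]; omega
  have hbin (R : Finset ℕ) := (isBinary_labels_regData n i z hz).mono (labelsIn_le _ R)
  have hbit (R : Finset ℕ) := (isBinary_labels_bitBlock n z hz).mono (labelsIn_le _ R)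
  have hSL : SSE (regData n i z) (Icc 1 j) ≤
      Multiset.card (labelsIn (bitBlock n z) (Icc 1 j)) := by
    rw [SSE_eq_sumSqDev]
    refine (hbin _).sumSqDev_le_sum.trans ?_
    rw [labelsIn_regData, if_neg hL, add_zero]
    split_ifs <;> simp [(hbit _).sum_le_card]
  have hSR : SSE (regData n i z) (Icc (j + 1) (2 * n + 1)) ≤
      Multiset.card (labelsIn (bitBlock n z) (Icc (j + 1) (2 * n + 1))) := by
    rw [SSE_eq_sumSqDev]
    refine (hbin _).sumSqDev_le_card_sub_sum.trans ?_
    rw [labelsIn_regData, if_neg hR, add_zero]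
    split_ifs <;> simp [(hbit _).sum_nonneg]
  have hcard := card_labelsIn_add_card_labelsIn_le (bitBlock n z) (Icc 1 j)
    (Icc (j + 1) (2 * n + 1)) (Finset.disjoint_left.mpr fun x h₁ h₂ => by
      simp only [Finset.mem_Icc] at h₁ h₂; omega)
  rw [card_bitBlock, ← sq] at hcard
  have hcard' : ((_ + _ : ℕ) : ℝ) ≤ (n ^ 2 : ℕ) := Nat.cast_le.mpr hcard
  push_cast at hcard'
  linarith

lemma L_regData_le {j : ℕ} (hj₁ : 2 * i - 1 ≤ j) (hj₂ : j ≤ 2 * i) :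
    L (2 * n + 1) (regData n i z) j ≤ 1 / 201 := by
  rw [L_regData]
  calc _ ≤ (n : ℝ) ^ 2 / (201 * n ^ 2) := by
        gcongr
        exact SSE_add_SSE_regData_le z hz hj₁ hj₂
    _ = 1 / 201 * ((n : ℝ) ^ 2 / n ^ 2) := by ring
    _ ≤ 1 / 201 := mul_le_of_le_one_right (by norm_num) (div_self_le_one _)

/-- A range containing both `T`-blocks holds at least `T` zeros and `T` ones among at most
`m = 201 n²` points, so its SSE is at least `T² / m`. -/
lemma SSE_regData_ge (hn : 1 ≤ n) {R : Finset ℕ} (h₀ : 2 * i - 1 ∈ R) (h₁ : 2 * i + 1 ∈ R) :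
    10000 / 201 * (n : ℝ) ^ 2 ≤ SSE (regData n i z) R := by
  have hcard : (Multiset.card (labelsIn (regData n i z) R) : ℝ) ≤ 201 * n ^ 2 := by
    rw [← card_regData n i z]
    exact_mod_cast (Multiset.card_le_card (labelsIn_le _ R)).trans_eq (Multiset.card_map _ _)
  have hbin := (isBinary_labels_regData n i z hz).mono (labelsIn_le _ R)
  rw [SSE_eq_sumSqDev]
  rw [labelsIn_regData, if_pos h₀, if_pos h₁] at hcard hbin ⊢
  have hbit := (isBinary_labels_bitBlock n z hz).mono (labelsIn_le _ R)
  set a := labelsIn (bitBlock n z) R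
  set ys := a + Multiset.replicate (100 * n ^ 2) 0 + Multiset.replicate (100 * n ^ 2) 1
  have hsum : ys.sum = a.sum + 100 * n ^ 2 := by simp [ys]
  have hcard_ys : (Multiset.card ys : ℝ) = Multiset.card a + 2 * (100 * n ^ 2) := by
    simp only [ys, Multiset.card_add, Multiset.card_replicate]
    push_cast
    ring
  have ha₀ := hbit.sum_nonneg
  have ha₁ := hbit.sum_le_card
  have hT : (0 : ℝ) < 100 * n ^ 2 := by positivity
  calc 10000 / 201 * (n : ℝ) ^ 2 = (100 * (n : ℝ) ^ 2) ^ 2 / (201 * n ^ 2) := by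
        field_simp; ring
    _ ≤ (100 * (n : ℝ) ^ 2) ^ 2 / Multiset.card ys := by
        gcongr
        rw [hcard_ys]; positivity
    _ ≤ sumSqDev ys := hbin.sq_div_card_le_sumSqDev hT.le (by linarith) (by linarith)

lemma one_div_201_le_L_regData (hi : i ∈ Icc 1 n) {j : ℕ} (hj : j + 2 ≤ 2 * i ∨ 2 * i + 1 ≤ j) :
    1 / 201 ≤ L (2 * n + 1) (regData n i z) j := by
  obtain ⟨hi₁, hi₂⟩ := Finset.mem_Icc.mp hi
  have hn : 1 ≤ n := hi₁.trans hi₂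
  have hpos : (0 : ℝ) < 201 * n ^ 2 := by positivity
  have hSSE (R : Finset ℕ) : 0 ≤ SSE (regData n i z) R := by
    rw [SSE_eq_sumSqDev]
    exact ((isBinary_labels_regData n i z hz).mono (labelsIn_le _ R)).sumSqDev_nonneg
  have hSL := hSSE (Icc 1 j)
  have hSR := hSSE (Icc (j + 1) (2 * n + 1))
  rw [L_regData, le_div_iff₀ hpos]
  rcases hj with hj | hj
  · have := SSE_regData_ge z hz hn (i := i) (R := Icc (j + 1) (2 * n + 1))
      (by simp only [Finset.mem_Icc]; omega) (by simp only [Finset.mem_Icc]; omega)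
    nlinarith
  · have := SSE_regData_ge z hz hn (i := i) (R := Icc 1 j)
      (by simp only [Finset.mem_Icc]; omega) (by simp only [Finset.mem_Icc]; omega)
    nlinarith

end regData

theorem reg_near_splits_loss_general (n : ℕ) (i : ℕ) (hi : i ∈ Finset.Icc 1 n)
    (z : ℕ → ℝ) (hz : ∀ k, z k = 0 ∨ z k = 1) :
    (L (2 * n + 1) (regData n i z) (2 * i - 1) ≤ 1 / 201 ∧
     L (2 * n + 1) (regData n i z) (2 * i) ≤ 1 / 201) ∧
    (Finset.Icc 0 (2 * n + 1)).inf' (Finset.nonempty_Icc.mpr (Nat.zero_le _))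
        (L (2 * n + 1) (regData n i z))
      = min (L (2 * n + 1) (regData n i z) (2 * i - 1))
          (L (2 * n + 1) (regData n i z) (2 * i)) := by
  obtain ⟨hi₁, hi₂⟩ := Finset.mem_Icc.mp hi
  have h₁ : L (2 * n + 1) (regData n i z) (2 * i - 1) ≤ 1 / 201 :=
    L_regData_le z hz le_rfl (by omega)
  have h₂ : L (2 * n + 1) (regData n i z) (2 * i) ≤ 1 / 201 :=
    L_regData_le z hz (by omega) le_rfl
  refine ⟨⟨h₁, h₂⟩, Finset.inf'_eq_min_of_le _
    (Finset.mem_Icc.mpr (by omega)) (Finset.mem_Icc.mpr (by omega)) ?_⟩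
  intro j _ hj₁ hj₂
  exact (min_le_left _ _).trans <| h₁.trans <| one_div_201_le_L_regData z hz hi (by omega)

/-- In the regression lower-bound construction, each of the two splits `2i−1` and `2i` has
mean squared loss at most `1/201`; consequently the optimum over all splits `0 ≤ j ≤ N` is
attained at one of them. -/
theorem reg_near_splits_loss (n : ℕ) (hn : 1 ≤ n) (i : ℕ) (hi : i ∈ Finset.Icc 1 n)
    (z : ℕ → ℝ) (hz : ∀ k, z k = 0 ∨ z k = 1) :
    (L (2 * n + 1) (regData n i z) (2 * i - 1) ≤ 1 / 201 ∧
     L (2 * n + 1) (regData n i z) (2 * i) ≤ 1 / 201) ∧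
    (Finset.Icc 0 (2 * n + 1)).inf' (Finset.nonempty_Icc.mpr (Nat.zero_le _))
        (L (2 * n + 1) (regData n i z))
      = min (L (2 * n + 1) (regData n i z) (2 * i - 1))
          (L (2 * n + 1) (regData n i z) (2 * i)) :=
  reg_near_splits_loss_general n i hi z hz
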